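/- For the Invincible Fighter (u = 1), for every integer s ≥ 1: lim_{t→0} N*(s,t) = 0 and lim_{t→∞} N*(s,t) = s·a(1); consequently, with D*(s,t) = N*(s,t) − N*(s−1,t), one has lim_{t→∞} D*(s,t) = a(1). -/

import Mathlib

/-!
For `u = 1` one has `N(n+1, t) = max_{1 ≤ j ≤ n+1} (a(j) + N*(n+1-j, t))`, and `N*(r, ·)` is the
exponential smoothing `t ↦ ∫₀ᵗ N(r, x) e^{-(t-x)} dx`, which is continuous, vanishes at `0`,
preserves upper bounds `B ≥ 0` on `[0, ∞)` and preserves limits at `∞`. Concavity and `a(0) = 0`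
give `a(j) ≤ j·a(1)`, so by induction `N(n, t) ≤ n·a(1)` for `t ≥ 0`, while the choice `j = 1`
gives `N(n+1, t) ≥ a(1) + N*(n, t) → (n+1)·a(1)`. Squeezing yields `N(n, t) → n·a(1)` and hence
`N*(n, t) → n·a(1)`; the claim about `D*` is the difference of two such limits.
-/

open Real MeasureTheory Filter Topology

/-- Auxiliary history-based recursion: `Nhist a u n m t` equals `N(m,t)` when `m ≤ n`. -/
noncomputable def Nhist (a : ℕ → ℝ) (u : ℝ) : ℕ → ℕ → ℝ → ℝ
  | 0, _, _ => 0
  | n + 1, m, t =>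
      if m ≤ n then Nhist a u n m t
      else (Finset.Icc 1 (n + 1)).sup'
          (Finset.nonempty_Icc.mpr (Nat.succ_le_succ (Nat.zero_le n)))
          (fun j => a j + (a j * (1 - u) + u) *
            (Real.exp (-t) * ∫ x in (0:ℝ)..t, Nhist a u n (n + 1 - j) x * Real.exp x))

/-- `Nval a u n t` is `N(n,t)`, the optimal expected number of enemy planes shot down,
with `N(0,t) = 0` and `N(n,t) = max_{1 ≤ j ≤ n} N_n(j,t)`. -/
noncomputable def Nval (a : ℕ → ℝ) (u : ℝ) (n : ℕ) (t : ℝ) : ℝ :=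
  Nhist a u n n t

/-- `Nstar a u r t` is `N*(r,t) = e^{-t} ∫_0^t N(r,x) e^x dx` (so `N*(0,t) = 0`). -/
noncomputable def Nstar (a : ℕ → ℝ) (u : ℝ) (r : ℕ) (t : ℝ) : ℝ :=
  Real.exp (-t) * ∫ x in (0:ℝ)..t, Nval a u r x * Real.exp x

/-- `Nalloc a u n j t` is `N_n(j,t) = a(j) + c(j)·N*(n-j,t)` where `c(j) = a(j)(1-u)+u`. -/
noncomputable def Nalloc (a : ℕ → ℝ) (u : ℝ) (n j : ℕ) (t : ℝ) : ℝ :=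
  a j + (a j * (1 - u) + u) * Nstar a u (n - j) t

/-- `Kopt a u n t = min { j ∈ {1,…,n} : N_n(j,t) = N(n,t) }`. -/
noncomputable def Kopt (a : ℕ → ℝ) (u : ℝ) (n : ℕ) (t : ℝ) : ℕ :=
  sInf {j : ℕ | 1 ≤ j ∧ j ≤ n ∧ Nalloc a u n j t = Nval a u n t}

/-- `expConv f t = ∫₀ᵗ f x e^{-(t-x)} dx` -/
noncomputable def expConv (f : ℝ → ℝ) (t : ℝ) : ℝ :=
  exp (-t) * ∫ x in (0:ℝ)..t, f x * exp x

@[simp]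
lemma expConv_zero (f : ℝ → ℝ) : expConv f 0 = 0 := by
  simp [expConv]

section expConv

variable {f : ℝ → ℝ}

lemma continuous_expConv (hf : Continuous f) : Continuous (expConv f) :=
  (continuous_exp.comp continuous_neg).mul
    (intervalIntegral.continuous_primitive
      (fun _ _ => (hf.mul continuous_exp).intervalIntegrable _ _) 0)

lemma integral_mul_exp_le (hf : Continuous f) {B T t : ℝ} (hTt : T ≤ t)
    (hB : ∀ x ∈ Set.Icc T t, f x ≤ B) :
    ∫ x in T..t, f x * exp x ≤ B * (exp t - exp T) := by
  calc ∫ x in T..t, f x * exp x ≤ ∫ x in T..t, B * exp x :=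
        intervalIntegral.integral_mono_on hTt ((hf.mul continuous_exp).intervalIntegrable _ _)
          (continuous_exp.intervalIntegrable _ _ |>.const_mul B)
          fun x hx => mul_le_mul_of_nonneg_right (hB x hx) (exp_pos x).le
    _ = B * (exp t - exp T) := by
        rw [intervalIntegral.integral_const_mul, integral_exp]

lemma expConv_le (hf : Continuous f) {B t : ℝ} (hB₀ : 0 ≤ B) (ht : 0 ≤ t)
    (hB : ∀ x ∈ Set.Icc 0 t, f x ≤ B) : expConv f t ≤ B := by
  have hint := integral_mul_exp_le hf ht hB
  rw [exp_zero] at hint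
  calc expConv f t ≤ exp (-t) * (B * (exp t - 1)) :=
        mul_le_mul_of_nonneg_left hint (exp_pos _).le
    _ = B - B * exp (-t) := by
        rw [exp_neg]; field_simp
    _ ≤ B := sub_le_self _ (mul_nonneg hB₀ (exp_pos _).le)

lemma abs_expConv_le (hf : Continuous f) {ε T t : ℝ} (hTt : T ≤ t)
    (hε : ∀ x ∈ Set.Icc T t, |f x| ≤ ε) :
    |expConv f t| ≤ exp (-t) * |∫ x in (0:ℝ)..T, f x * exp x| + ε := by
  have hint : ∀ p q : ℝ, IntervalIntegrable (fun x => f x * exp x) volume p q :=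
    fun _ _ => (hf.mul continuous_exp).intervalIntegrable _ _
  have htail : |∫ x in T..t, f x * exp x| ≤ ε * (exp t - exp T) :=
    calc |∫ x in T..t, f x * exp x| ≤ ∫ x in T..t, |f x| * exp x := by
          simpa only [abs_mul, abs_exp] using
            intervalIntegral.abs_integral_le_integral_abs (f := fun x => f x * exp x) hTt
      _ ≤ ε * (exp t - exp T) := integral_mul_exp_le hf.abs hTt hε
  have hε₀ : 0 ≤ ε := (abs_nonneg _).trans (hε T ⟨le_rfl, hTt⟩)
  rw [expConv, ← intervalIntegral.integral_add_adjacent_intervals (hint 0 T) (hint T t),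
    abs_mul, abs_exp]
  calc exp (-t) * |(∫ x in (0:ℝ)..T, f x * exp x) + ∫ x in T..t, f x * exp x|
      ≤ exp (-t) * (|∫ x in (0:ℝ)..T, f x * exp x| + ε * (exp t - exp T)) := by
        gcongr
        exact (abs_add_le _ _).trans (by gcongr)
    _ = exp (-t) * |∫ x in (0:ℝ)..T, f x * exp x| + ε - ε * exp (T - t) := by
        rw [exp_sub, exp_neg]; field_simp; ring
    _ ≤ exp (-t) * |∫ x in (0:ℝ)..T, f x * exp x| + ε :=
        sub_le_self _ (mul_nonneg hε₀ (exp_pos _).le)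

lemma tendsto_expConv_zero (hf : Continuous f) (hlim : Tendsto f atTop (𝓝 0)) :
    Tendsto (expConv f) atTop (𝓝 0) := by
  rw [Metric.tendsto_atTop]
  intro ε hε
  obtain ⟨T, hT⟩ := Metric.tendsto_atTop.mp hlim (ε / 2) (half_pos hε)
  set C := |∫ x in (0:ℝ)..T, f x * exp x|
  have hdecay : Tendsto (fun t => exp (-t) * C) atTop (𝓝 0) := by
    simpa using tendsto_exp_neg_atTop_nhds_zero.mul_const C
  obtain ⟨T', hT'⟩ := Metric.tendsto_atTop.mp hdecay (ε / 2) (half_pos hε)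
  refine ⟨max T T', fun t ht => ?_⟩
  have hsmall : ∀ x ∈ Set.Icc T t, |f x| ≤ ε / 2 := fun x hx => by
    simpa using (hT x hx.1).le
  have hC : exp (-t) * C < ε / 2 := by
    have h := hT' t (le_of_max_le_right ht)
    rwa [Real.dist_eq, sub_zero, abs_of_nonneg (by positivity)] at h
  rw [Real.dist_eq, sub_zero]
  linarith [abs_expConv_le hf (le_of_max_le_left ht) hsmall]

lemma expConv_const (c t : ℝ) : expConv (fun _ => c) t = c - c * exp (-t) := by
  rw [expConv, intervalIntegral.integral_const_mul, integral_exp, exp_zero, exp_neg]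
  field_simp

lemma tendsto_expConv (hf : Continuous f) {L : ℝ} (hlim : Tendsto f atTop (𝓝 L)) :
    Tendsto (expConv f) atTop (𝓝 L) := by
  have hsplit : ∀ t, expConv f t = expConv (fun x => f x - L) t + (L - L * exp (-t)) := by
    intro t
    have hsub : IntervalIntegrable (fun x => (f x - L) * exp x) volume 0 t :=
      ((hf.sub continuous_const).mul continuous_exp).intervalIntegrable _ _
    have hL : IntervalIntegrable (fun x => L * exp x) volume 0 t :=
      (continuous_const.mul continuous_exp).intervalIntegrable _ _
    rw [← expConv_const, expConv, expConv, expConv, ← mul_add,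
      ← intervalIntegral.integral_add hsub hL]
    simp only [sub_mul, sub_add_cancel]
  have hconst : Tendsto (fun t => L - L * exp (-t)) atTop (𝓝 L) := by
    simpa using tendsto_const_nhds.sub (tendsto_exp_neg_atTop_nhds_zero.const_mul L)
  simpa [funext hsplit] using
    (tendsto_expConv_zero (f := fun x => f x - L) (hf.sub continuous_const)
      (tendsto_sub_nhds_zero_iff.mpr hlim)).add hconst

end expConv

lemma le_natCast_mul_of_antitone_sub {a : ℕ → ℝ} (ha0 : a 0 = 0)
    (hconc : Antitone fun j => a (j + 1) - a j) (j : ℕ) : a j ≤ j * a 1 := by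
  induction j with
  | zero => simp [ha0]
  | succ k ih =>
    have hstep : a (k + 1) - a k ≤ a 1 - a 0 := hconc (Nat.zero_le k)
    push_cast
    linarith

section Nval

variable (a : ℕ → ℝ) (u : ℝ)

lemma Nhist_eq_Nval : ∀ {n m : ℕ}, m ≤ n → ∀ t, Nhist a u n m t = Nval a u m t
  | 0, _, hm, _ => by rw [Nat.le_zero.mp hm]; rfl
  | n + 1, m, hm, t => by
    rcases Nat.lt_or_ge m (n + 1) with hlt | hge
    · rw [Nhist, if_pos (Nat.lt_succ_iff.mp hlt)]
      exact Nhist_eq_Nval (Nat.lt_succ_iff.mp hlt) t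
    · rw [le_antisymm hm hge]; rfl

lemma Nstar_eq_expConv (r : ℕ) : Nstar a u r = expConv (Nval a u r) := rfl

lemma Nval_zero (t : ℝ) : Nval a u 0 t = 0 := rfl

lemma Nval_succ (n : ℕ) (t : ℝ) :
    Nval a u (n + 1) t = (Finset.Icc 1 (n + 1)).sup' (Finset.nonempty_Icc.2 (by omega))
      (fun j => Nalloc a u (n + 1) j t) := by
  rw [Nval, Nhist, if_neg (Nat.not_succ_le_self n)]
  refine Finset.sup'_congr _ rfl fun j hj => ?_
  have hj := Finset.mem_Icc.mp hj
  simp only [Nalloc, Nstar, Nhist_eq_Nval a u (show n + 1 - j ≤ n by omega)]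

lemma Nalloc_le_Nval {n j : ℕ} (hj : 1 ≤ j) (hjn : j ≤ n) (t : ℝ) :
    Nalloc a u n j t ≤ Nval a u n t := by
  obtain ⟨n, rfl⟩ : ∃ m, n = m + 1 := ⟨n - 1, by omega⟩
  rw [Nval_succ]
  exact Finset.le_sup' (fun j => Nalloc a u (n + 1) j t) (Finset.mem_Icc.2 ⟨hj, hjn⟩)

lemma Nval_succ_le {n : ℕ} {t B : ℝ}
    (hB : ∀ j, 1 ≤ j → j ≤ n + 1 → Nalloc a u (n + 1) j t ≤ B) : Nval a u (n + 1) t ≤ B := by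
  rw [Nval_succ]
  exact Finset.sup'_le _ _ fun j hj => hB j (Finset.mem_Icc.1 hj).1 (Finset.mem_Icc.1 hj).2

lemma continuous_Nval (n : ℕ) : Continuous (Nval a u n) := by
  induction n using Nat.strong_induction_on with
  | _ n ih =>
    cases n with
    | zero => exact continuous_const
    | succ n =>
      rw [funext (Nval_succ a u n)]
      refine Continuous.finset_sup'_apply _ fun j hj => ?_
      have hj := Finset.mem_Icc.1 hj
      unfold Nalloc
      exact continuous_const.add
        (continuous_const.mul (continuous_expConv (ih (n + 1 - j) (by omega))))

lemma continuous_Nstar (r : ℕ) : Continuous (Nstar a u r) :=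
  continuous_expConv (continuous_Nval a u r)

end Nval

section Invincible

variable {a : ℕ → ℝ}

lemma Nalloc_one (n j : ℕ) (t : ℝ) : Nalloc a 1 n j t = a j + Nstar a 1 (n - j) t := by
  simp [Nalloc]

lemma Nval_one_le (ha1 : 0 ≤ a 1) (hsub : ∀ j : ℕ, a j ≤ j * a 1) (n : ℕ) {t : ℝ}
    (ht : 0 ≤ t) : Nval a 1 n t ≤ n * a 1 := by
  induction n using Nat.strong_induction_on generalizing t with
  | _ n ih =>
    cases n with
    | zero => simp [Nval_zero]
    | succ n =>
      refine Nval_succ_le a 1 fun j hj hjn => ?_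
      have hstar : Nstar a 1 (n + 1 - j) t ≤ (n + 1 - j : ℕ) * a 1 :=
        expConv_le (continuous_Nval a 1 _) (by positivity) ht fun x hx => ih _ (by omega) hx.1
      rw [Nat.cast_sub hjn] at hstar
      rw [Nalloc_one]
      push_cast at hstar ⊢
      linarith [hsub j]

lemma tendsto_Nval_one_atTop (ha1 : 0 ≤ a 1) (hsub : ∀ j : ℕ, a j ≤ j * a 1) (n : ℕ) :
    Tendsto (Nval a 1 n) atTop (𝓝 (n * a 1)) := by
  induction n with
  | zero =>
    simpa only [Nat.cast_zero, zero_mul] using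
      tendsto_const_nhds.congr fun t => (Nval_zero a 1 t).symm
  | succ n ih =>
    have hlow : Tendsto (fun t => a 1 + Nstar a 1 n t) atTop (𝓝 ((n + 1 : ℕ) * a 1)) := by
      rw [Nstar_eq_expConv, Nat.cast_succ, add_one_mul, add_comm]
      exact (tendsto_expConv (continuous_Nval a 1 n) ih).const_add (a 1)
    refine tendsto_of_tendsto_of_tendsto_of_le_of_le' hlow tendsto_const_nhds ?_ ?_
    · refine Eventually.of_forall fun t => ?_
      simpa [Nalloc_one] using Nalloc_le_Nval a 1 le_rfl (by omega : 1 ≤ n + 1) t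
    · filter_upwards [eventually_ge_atTop 0] with t ht using Nval_one_le ha1 hsub _ ht

lemma tendsto_Nstar_one_atTop (ha1 : 0 ≤ a 1) (hsub : ∀ j : ℕ, a j ≤ j * a 1) (n : ℕ) :
    Tendsto (Nstar a 1 n) atTop (𝓝 (n * a 1)) :=
  tendsto_expConv (continuous_Nval a 1 n) (tendsto_Nval_one_atTop ha1 hsub n)

end Invincible

theorem invincible_Nstar_limits_general
    (a : ℕ → ℝ) (ha0 : a 0 = 0)
    (hmono : StrictMono a)
    (hconc : ∀ j : ℕ, a (j + 2) - a (j + 1) < a (j + 1) - a j) :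
    ∀ s : ℕ, 1 ≤ s →
      Tendsto (fun t => Nstar a 1 s t) (nhdsWithin 0 (Set.Ioi 0)) (nhds 0) ∧
      Tendsto (fun t => Nstar a 1 s t) atTop (nhds ((s : ℝ) * a 1)) ∧
      Tendsto (fun t => Nstar a 1 s t - Nstar a 1 (s - 1) t) atTop (nhds (a 1)) := by
  have ha1 : 0 ≤ a 1 := ha0 ▸ (hmono zero_lt_one).le
  have hsub : ∀ j : ℕ, a j ≤ j * a 1 :=
    le_natCast_mul_of_antitone_sub ha0 (antitone_nat_of_succ_le fun j => (hconc j).le)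
  intro s hs
  refine ⟨?_, tendsto_Nstar_one_atTop ha1 hsub s, ?_⟩
  · have h0 : Nstar a 1 s 0 = 0 := expConv_zero _
    simpa [h0] using ((continuous_Nstar a 1 s).tendsto 0).mono_left nhdsWithin_le_nhds
  · convert (tendsto_Nstar_one_atTop ha1 hsub s).sub (tendsto_Nstar_one_atTop ha1 hsub (s - 1))
      using 2
    rw [Nat.cast_sub hs]
    ring

/-- For the Invincible Fighter (`u = 1`) and every `s ≥ 1`: `N*(s,t) → 0` as `t → 0⁺`,
`N*(s,t) → s·a(1)` as `t → ∞`, and hence `D*(s,t) = N*(s,t) - N*(s-1,t) → a(1)`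
as `t → ∞`. -/
theorem invincible_Nstar_limits
    (a : ℕ → ℝ) (haI : ∀ j, a j ∈ Set.Icc (0:ℝ) 1) (ha0 : a 0 = 0)
    (hmono : StrictMono a)
    (hconc : ∀ j : ℕ, a (j + 2) - a (j + 1) < a (j + 1) - a j) :
    ∀ s : ℕ, 1 ≤ s →
      Tendsto (fun t => Nstar a 1 s t) (nhdsWithin 0 (Set.Ioi 0)) (nhds 0) ∧
      Tendsto (fun t => Nstar a 1 s t) atTop (nhds ((s : ℝ) * a 1)) ∧
      Tendsto (fun t => Nstar a 1 s t - Nstar a 1 (s - 1) t) atTop (nhds (a 1)) :=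
  invincible_Nstar_limits_general a ha0 hmono hconc
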